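/- Let v be a presuffix of a string z with |z| > N/2 where z is a substring of a string x of length N sharing two overlapping occurrences, and suppose v has periodic string t and v = t^{m'} y with m' > 0 and |y| < |t|. If a = t b (with |b| < |t|, b a prefix of t) is also a suffix of z, then y = b; i.e., the 'remainder' of v modulo its period t must equal the remainder b of a. -/

import Mathlib

def occursAt (z x : List Bool) (i : ℕ) : Prop :=
  i + z.length ≤ x.length ∧ (x.drop i).take z.length = z

def rep (t : List Bool) (n : ℕ) : List Bool := (List.replicate n t).flatten

def isPeriodWordOf (t a : List Bool) : Prop :=
  t ≠ [] ∧ ∀ i < a.length, a[i]? = t[i % t.length]?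

def isPeriodicStringOf (t a : List Bool) : Prop :=
  isPeriodWordOf t a ∧ ∀ t', isPeriodWordOf t' a → t.length ≤ t'.length

/-!
Both `v` and `a` are suffixes of `z` whose letters follow the infinite word `t t t ⋯`, so the
shorter one sits inside the longer one at some offset `s`. Reading the common part in both
ways shows that `t t t ⋯` is invariant under the shift by `s`, hence also under the shift by
`s mod |t|`; minimality of `|t|` forces `|t| ∣ s`. Therefore `|v| ≡ |a| (mod |t|)`, i.e.
`|y| = |b|`, and two suffixes of `z` of the same length coincide.
-/

open Function

lemma rep_length (t : List Bool) (n : ℕ) : (rep t n).length = n * t.length := by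
  simp [rep, List.sum_replicate]

lemma Function.Periodic.nat_mod {α : Type*} {f : ℕ → α} {k L : ℕ} (hk : Periodic f k)
    (hL : Periodic f L) : Periodic f (k % L) := fun n =>
  calc f (n + k % L) = f (n + k % L + k / L * L) := (hL.nat_mul _ _).symm
    _ = f (n + k) := by rw [add_assoc, Nat.mod_add_div']
    _ = f n := hk n

def periodicExt (t : List Bool) (n : ℕ) : Option Bool := t[n % t.length]?

lemma periodic_periodicExt (t : List Bool) : Periodic (periodicExt t) t.length := by
  intro n
  simp [periodicExt]

lemma isPeriodWordOf_take {t a : List Bool} {p : ℕ} (hta : isPeriodWordOf t a)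
    (hp : Periodic (periodicExt t) p) (hp0 : 0 < p) (hpt : p ≤ t.length) :
    isPeriodWordOf (t.take p) a := by
  have hlen : (t.take p).length = p := List.length_take_of_le hpt
  refine ⟨fun h => by simp [h] at hlen; omega, fun i hi => ?_⟩
  rw [hta.2 i hi, hlen, List.getElem?_take_of_lt (Nat.mod_lt i hp0)]
  have hred := hp.map_mod_nat i
  simp only [periodicExt, Nat.mod_eq_of_lt ((Nat.mod_lt i hp0).trans_le hpt)] at hred
  exact hred.symm

lemma isPeriodicStringOf.dvd_of_periodic {t a : List Bool} {k : ℕ}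
    (hta : isPeriodicStringOf t a) (hk : Periodic (periodicExt t) k) : t.length ∣ k := by
  have ht : 0 < t.length := List.length_pos_iff.2 hta.1.1
  refine Nat.dvd_of_mod_eq_zero (Nat.eq_zero_of_not_pos fun hk0 => ?_)
  have hshort := hta.2 _ (isPeriodWordOf_take hta.1 (hk.nat_mod (periodic_periodicExt t)) hk0
    (Nat.mod_lt k ht).le)
  rw [List.length_take_of_le (Nat.mod_lt k ht).le] at hshort
  exact hshort.not_gt (Nat.mod_lt k ht)

lemma periodic_periodicExt_of_append {t s u : List Bool} (hw : isPeriodWordOf t (s ++ u))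
    (hu : isPeriodWordOf t u) (hlen : t.length ≤ u.length) :
    Periodic (periodicExt t) s.length := by
  have ht : 0 < t.length := List.length_pos_iff.2 hu.1
  have hshift : ∀ r < u.length, periodicExt t (r + s.length) = periodicExt t r := fun r hr => by
    rw [periodicExt, periodicExt, ← hw.2 _ (by simp; omega), ← hu.2 r hr,
      List.getElem?_append_right (by omega), Nat.add_sub_cancel]
  intro n
  calc periodicExt t (n + s.length)
      = periodicExt t (n % t.length + s.length + n / t.length * t.length) := by
        congr 1; linarith [Nat.mod_add_div' n t.length]
    _ = periodicExt t (n % t.length + s.length) := (periodic_periodicExt t).nat_mul _ _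
    _ = periodicExt t (n % t.length) := hshift _ ((Nat.mod_lt n ht).trans_le hlen)
    _ = periodicExt t n := (periodic_periodicExt t).map_mod_nat n

lemma length_modEq_of_isSuffix {t a u w : List Bool} (hta : isPeriodicStringOf t a)
    (hu : isPeriodWordOf t u) (hw : isPeriodWordOf t w) (huw : u <:+ w)
    (hlen : t.length ≤ u.length) : u.length ≡ w.length [MOD t.length] := by
  obtain ⟨s, rfl⟩ := huw
  have hs := hta.dvd_of_periodic (periodic_periodicExt_of_append hw hu hlen)
  simpa using ((Nat.modEq_zero_iff_dvd.2 hs).add_right u.length).symm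

lemma length_modEq_of_isSuffix_of_isSuffix {t a u w z : List Bool} (hta : isPeriodicStringOf t a)
    (hu : isPeriodWordOf t u) (hw : isPeriodWordOf t w) (huz : u <:+ z) (hwz : w <:+ z)
    (hut : t.length ≤ u.length) (hwt : t.length ≤ w.length) :
    u.length ≡ w.length [MOD t.length] := by
  rcases le_total u.length w.length with h | h
  · exact length_modEq_of_isSuffix hta hu hw (List.suffix_of_suffix_length_le huz hwz h) hut
  · exact (length_modEq_of_isSuffix hta hw hu (List.suffix_of_suffix_length_le hwz huz h) hwt).symm

theorem stmt12_general (z v t y a b : List Bool) (m' : ℕ)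
    (hv : v <+: z ∧ v <:+ z)
    (htv : isPeriodicStringOf t v)
    (hvty : v = rep t m' ++ y) (hm' : 0 < m') (hyt : y.length < t.length)
    (hab : a = t ++ b) (hbt : b.length < t.length)
    (ha : a <:+ z) (hta : isPeriodicStringOf t a) :
    y = b := by
  subst hvty hab
  have hvt : t.length ≤ (rep t m' ++ y).length := by
    simp only [List.length_append, rep_length]; nlinarith
  have hmod := length_modEq_of_isSuffix_of_isSuffix hta htv.1 hta.1 hv.2 ha hvt (by simp)
  have hlen : y.length = b.length := by
    simp only [List.length_append, rep_length, Nat.ModEq] at hmod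
    simpa [Nat.mod_eq_of_lt hyt, Nat.mod_eq_of_lt hbt] using hmod
  have hyz : y <:+ z := (List.suffix_append _ _).trans hv.2
  have hbz : b <:+ z := (List.suffix_append _ _).trans ha
  exact (List.suffix_of_suffix_length_le hyz hbz hlen.le).eq_of_length hlen

theorem stmt12 (N : ℕ) (x z v t y a b : List Bool) (m' i j : ℕ)
    (hx : x.length = N) (hz : 2 * z.length > N)
    (hi : occursAt z x i) (hj : occursAt z x j) (hij : i ≠ j)
    (hv : v <+: z ∧ v <:+ z)
    (htv : isPeriodicStringOf t v)
    (hvty : v = rep t m' ++ y) (hm' : 0 < m') (hyt : y.length < t.length)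
    (hab : a = t ++ b) (hbt : b.length < t.length) (hbpre : b <+: t)
    (ha : a <:+ z) (hta : isPeriodicStringOf t a) :
    y = b :=
  stmt12_general z v t y a b m' hv htv hvty hm' hyt hab hbt ha hta
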